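/- For natural numbers k and n, let e_k(n) denote the number of walks of length n on {0,1,…,k} starting and ending at 0 with steps +1 or −1, and let E_k ∈ ℚ⟦t⟧ be the formal power series whose n-th coefficient is e_k(n). Then E₀ = 1, and for every k ≥ 1 one has E_k·(1 − t²·E_{k−1}) = 1 in ℚ⟦t⟧. -/

import Mathlib

/-!
An excursion of positive length in `{0, …, k}` splits at its first return to `0` into an up-step,
an excursion in `{1, …, k}` (a shifted excursion in `{0, …, k - 1}`), a down-step and an excursion
in `{0, …, k}`; the split is unique. Hence `E_k = 1 + t² E_{k-1} E_k`, and `E₀ = 1` since no step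
stays at height `0`. The decomposition is realised as a bijection between excursions and the binary
trees `DyckTree k`.
-/

/-- The number of walks of length `n` on `{0, 1, …, k}` starting and ending at `0`,
with steps `+1` or `-1`. -/
noncomputable def boundedExcursionCount (k n : ℕ) : ℕ :=
  Nat.card {w : Fin (n + 1) → ℕ //
    w 0 = 0 ∧ w (Fin.last n) = 0 ∧ (∀ j : Fin (n + 1), w j ≤ k) ∧
    ∀ j : Fin n, ((w j.succ : ℤ) - (w j.castSucc : ℤ)).natAbs = 1}

/-- The generating function of excursions on `{0, …, k}`. -/
noncomputable def boundedExcursionSeries (k : ℕ) : PowerSeries ℚ :=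
  PowerSeries.mk fun n => (boundedExcursionCount k n : ℚ)

open Finset.HasAntidiagonal

theorem List.head?_dropWhile_ne_of_mem {α : Type*} [DecidableEq α] {a : α} {l : List α}
    (ha : a ∈ l) : (l.dropWhile (· ≠ a)).head? = some a := by
  have hne : l.dropWhile (· ≠ a) ≠ [] := fun h => by
    simpa using List.dropWhile_eq_nil_iff.1 h a ha
  rw [List.head?_eq_some_head hne]
  exact congrArg some (not_not.1 (of_decide_eq_false (List.head_dropWhile_not _ hne)))

def IsUnitStep (a b : ℕ) : Prop := ((b : ℤ) - (a : ℤ)).natAbs = 1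

structure IsBoundedExcursion (k h : ℕ) (l : List ℕ) : Prop where
  head?_eq : l.head? = some h
  getLast?_eq : l.getLast? = some h
  mem_bounds : ∀ x ∈ l, h ≤ x ∧ x ≤ h + k
  isChain : l.IsChain IsUnitStep

theorem isBoundedExcursion_ofFn_iff {k n : ℕ} (w : Fin (n + 1) → ℕ) :
    IsBoundedExcursion k 0 (List.ofFn w) ↔
      w 0 = 0 ∧ w (Fin.last n) = 0 ∧ (∀ j : Fin (n + 1), w j ≤ k) ∧
        ∀ j : Fin n, ((w j.succ : ℤ) - (w j.castSucc : ℤ)).natAbs = 1 := by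
  have hhead : (List.ofFn w).head? = some (w 0) := by simp
  have hlast : (List.ofFn w).getLast? = some (w (Fin.last n)) := by
    rw [List.getLast?_eq_some_getLast (by simp), List.getLast_ofFn_succ]
  have hmem : (∀ x ∈ List.ofFn w, 0 ≤ x ∧ x ≤ 0 + k) ↔ ∀ j, w j ≤ k := by
    simp only [List.forall_mem_ofFn_iff, zero_le, true_and, zero_add]
  have hchain : (List.ofFn w).IsChain IsUnitStep ↔
      ∀ j : Fin n, IsUnitStep (w j.castSucc) (w j.succ) := by
    rw [List.isChain_ofFn]
    exact ⟨fun H j => H j (by omega), fun H i hi => H ⟨i, by omega⟩⟩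
  constructor
  · rintro ⟨h₀, hₙ, hb, hc⟩
    rw [hhead, Option.some_inj] at h₀
    rw [hlast, Option.some_inj] at hₙ
    exact ⟨h₀, hₙ, hmem.1 hb, hchain.1 hc⟩
  · rintro ⟨h₀, hₙ, hb, hc⟩
    exact ⟨hhead.trans (congrArg some h₀), hlast.trans (congrArg some hₙ), hmem.2 hb, hchain.2 hc⟩

/-- `node a b` steps up, runs `a` one level higher, steps down and then runs `b`;
the index bounds the height. -/
inductive DyckTree : ℕ → Type
  | leaf {k : ℕ} : DyckTree k
  | node {k : ℕ} : DyckTree k → DyckTree (k + 1) → DyckTree (k + 1)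

namespace DyckTree

variable {k : ℕ}

def size : ∀ {k : ℕ}, DyckTree k → ℕ
  | _, leaf => 0
  | _, node a b => a.size + b.size + 2

def toList : ∀ {k : ℕ}, ℕ → DyckTree k → List ℕ
  | _, h, leaf => [h]
  | _, h, node a b => h :: (a.toList (h + 1) ++ b.toList h)

theorem length_toList (t : DyckTree k) (h : ℕ) : (t.toList h).length = t.size + 1 := by
  induction t generalizing h with
  | leaf => rfl
  | node a b iha ihb =>
    simp only [toList, size, List.length_cons, List.length_append, iha, ihb]
    omega

theorem toList_eq_cons (t : DyckTree k) (h : ℕ) : ∃ l, t.toList h = h :: l := by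
  cases t <;> exact ⟨_, rfl⟩

theorem getLast?_toList (t : DyckTree k) (h : ℕ) : (t.toList h).getLast? = some h := by
  induction t generalizing h with
  | leaf => rfl
  | node _ b _ ihb => simp [toList, List.getLast?_cons, List.getLast?_append, ihb]

theorem mem_toList_bounds (t : DyckTree k) (h : ℕ) : ∀ x ∈ t.toList h, h ≤ x ∧ x ≤ h + k := by
  induction t generalizing h with
  | leaf => simp [toList]
  | node a b iha ihb =>
    intro x hx
    simp only [toList, List.mem_cons, List.mem_append] at hx
    rcases hx with rfl | hx | hx
    · omega
    · have := iha (h + 1) x hx; omega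
    · have := ihb h x hx; omega

theorem isChain_toList (t : DyckTree k) (h : ℕ) : (t.toList h).IsChain IsUnitStep := by
  induction t generalizing h with
  | leaf => exact List.isChain_singleton h
  | node a b iha ihb =>
    obtain ⟨la, hla⟩ := a.toList_eq_cons (h + 1)
    obtain ⟨lb, hlb⟩ := b.toList_eq_cons h
    rw [toList, ← List.cons_append, List.isChain_append]
    refine ⟨?_, ihb h, ?_⟩
    · rw [hla, List.isChain_cons_cons, ← hla]
      exact ⟨by simp [IsUnitStep], iha (h + 1)⟩
    · rw [List.getLast?_cons, getLast?_toList, hlb]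
      simp [IsUnitStep]

theorem isBoundedExcursion_toList (t : DyckTree k) (h : ℕ) :
    IsBoundedExcursion k h (t.toList h) where
  head?_eq := by obtain ⟨l, hl⟩ := t.toList_eq_cons h; rw [hl]; rfl
  getLast?_eq := t.getLast?_toList h
  mem_bounds := t.mem_toList_bounds h
  isChain := t.isChain_toList h

/-- The first return of `node a b` to height `h` is where `b` starts. -/
theorem takeWhile_dropWhile_toList_append (a : DyckTree k) (b : DyckTree (k + 1)) (h : ℕ) :
    (a.toList (h + 1) ++ b.toList h).takeWhile (· ≠ h) = a.toList (h + 1) ∧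
      (a.toList (h + 1) ++ b.toList h).dropWhile (· ≠ h) = b.toList h := by
  have ha : ∀ x ∈ a.toList (h + 1), decide (x ≠ h) = true := fun x hx => by
    have := a.mem_toList_bounds (h + 1) x hx; simp; omega
  obtain ⟨lb, hlb⟩ := b.toList_eq_cons h
  rw [List.takeWhile_append_of_pos ha, List.dropWhile_append_of_pos ha, hlb]
  simp

theorem toList_injective (h : ℕ) : Function.Injective (toList (k := k) h) := by
  intro t
  induction t generalizing h with
  | leaf =>
    intro t' heq
    cases t' with
    | leaf => rfl
    | node => simpa [length_toList, size] using congrArg List.length heq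
  | node a b iha ihb =>
    intro t' heq
    cases t' with
    | leaf => simpa [length_toList, size] using congrArg List.length heq
    | node a' b' =>
      simp only [toList, List.cons.injEq, true_and] at heq
      have hsplit := takeWhile_dropWhile_toList_append a b h
      have hsplit' := takeWhile_dropWhile_toList_append a' b' h
      rw [heq] at hsplit
      rw [iha (h + 1) (hsplit.1.symm.trans hsplit'.1), ihb h (hsplit.2.symm.trans hsplit'.2)]

end DyckTree

namespace IsBoundedExcursion

variable {k h : ℕ}

theorem exists_append {t : List ℕ} (hl : IsBoundedExcursion k h (h :: t)) (ht : t ≠ []) :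
    ∃ k' A B, k = k' + 1 ∧ t = A ++ B ∧
      IsBoundedExcursion k' (h + 1) A ∧ IsBoundedExcursion (k' + 1) h B := by
  obtain ⟨z, t', rfl⟩ := List.exists_cons_of_ne_nil ht
  obtain ⟨hstep, hchain⟩ := List.isChain_cons_cons.1 hl.isChain
  have hmem : ∀ x ∈ z :: t', h ≤ x ∧ x ≤ h + k := fun x hx => hl.mem_bounds x (.tail h hx)
  have hz : z = h + 1 := by have := hmem z (by simp); unfold IsUnitStep at hstep; omega
  obtain ⟨k', rfl⟩ : ∃ k', k = k' + 1 := ⟨k - 1, by have := hmem z (by simp); omega⟩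
  have hlast : (z :: t').getLast? = some h := by
    simpa [List.getLast?_cons_cons] using hl.getLast?_eq
  set A := (z :: t').takeWhile (· ≠ h)
  set B := (z :: t').dropWhile (· ≠ h)
  have hAB : A ++ B = z :: t' := List.takeWhile_append_dropWhile
  have hA : ∀ x ∈ A, h + 1 ≤ x ∧ x ≤ h + 1 + k' := fun x hx => by
    have := hmem x (hAB ▸ List.mem_append_left B hx)
    have : x ≠ h := by simpa using List.mem_takeWhile_imp hx
    omega
  have hBhead : B.head? = some h := List.head?_dropWhile_ne_of_mem (List.mem_of_getLast? hlast)
  have hB : B ≠ [] := fun hB => by simp [hB] at hBhead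
  have hAhead : A.head? = some (h + 1) := by simp [A, List.takeWhile_cons_of_pos, hz]
  rw [← hAB, List.isChain_append] at hchain
  obtain ⟨hchainA, hchainB, hlink⟩ := hchain
  refine ⟨k', A, B, rfl, hAB.symm, ⟨hAhead, ?_, hA, hchainA⟩,
    ⟨hBhead, by rwa [← hAB, List.getLast?_append_of_ne_nil _ hB] at hlast,
      fun x hx => hmem x (hAB ▸ List.mem_append_right A hx), hchainB⟩⟩
  -- the last height of `A` lies above `h` and is one step away from the head `h` of `B`
  have hAne : A ≠ [] := fun hA => by simp [hA] at hAhead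
  have hx := List.getLast?_eq_some_getLast hAne
  have hstep := hlink _ hx h hBhead
  have := hA _ (List.getLast_mem hAne)
  unfold IsUnitStep at hstep
  rw [hx]
  congr 1
  omega

theorem exists_toList_eq {l : List ℕ} (hl : IsBoundedExcursion k h l) :
    ∃ t : DyckTree k, t.toList h = l := by
  induction hn : l.length using Nat.strong_induction_on generalizing k h l with
  | _ n ih =>
  obtain ⟨t, rfl⟩ := List.head?_eq_some_iff.1 hl.head?_eq
  rcases eq_or_ne t [] with rfl | ht
  · exact ⟨.leaf, rfl⟩
  obtain ⟨k', A, B, rfl, rfl, hA, hB⟩ := hl.exists_append ht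
  obtain ⟨a, rfl⟩ := ih _ (by simp [← hn]) hA rfl
  obtain ⟨b, rfl⟩ := ih _ (by simp [← hn]) hB rfl
  exact ⟨.node a b, rfl⟩

end IsBoundedExcursion

namespace DyckTree

noncomputable def equivIsBoundedExcursion (k h : ℕ) :
    DyckTree k ≃ {l : List ℕ // IsBoundedExcursion k h l} :=
  Equiv.ofBijective (fun t => ⟨t.toList h, t.isBoundedExcursion_toList h⟩)
    ⟨fun _ _ heq => toList_injective h (congrArg Subtype.val heq),
      fun l => l.2.exists_toList_eq.imp fun _ ht => Subtype.ext ht⟩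

end DyckTree

noncomputable def excursionEquivDyckTree (k n : ℕ) :
    {w : Fin (n + 1) → ℕ // w 0 = 0 ∧ w (Fin.last n) = 0 ∧ (∀ j : Fin (n + 1), w j ≤ k) ∧
      ∀ j : Fin n, ((w j.succ : ℤ) - (w j.castSucc : ℤ)).natAbs = 1} ≃
      {t : DyckTree k // t.size = n} :=
  calc _ ≃ {v : List.Vector ℕ (n + 1) // IsBoundedExcursion k 0 v.toList} :=
        (Equiv.vectorEquivFin ℕ (n + 1)).symm.subtypeEquiv fun w => by
          rw [← isBoundedExcursion_ofFn_iff]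
          simp only [Equiv.vectorEquivFin, Equiv.coe_fn_symm_mk, List.Vector.toList_ofFn]
    _ ≃ {l : List ℕ // l.length = n + 1 ∧ IsBoundedExcursion k 0 l} :=
        Equiv.subtypeSubtypeEquivSubtypeInter _ _
    _ ≃ {l : {l : List ℕ // IsBoundedExcursion k 0 l} // l.1.length = n + 1} :=
        ((Equiv.subtypeEquivRight fun _ => and_comm).trans
          (Equiv.subtypeSubtypeEquivSubtypeInter _ _).symm)
    _ ≃ {t : DyckTree k // t.size = n} :=
        ((DyckTree.equivIsBoundedExcursion k 0).subtypeEquiv fun t => by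
          show t.size = n ↔ (t.toList 0).length = n + 1
          rw [DyckTree.length_toList, Nat.add_right_cancel_iff]).symm

namespace DyckTree

instance finite_size_eq (k n : ℕ) : Finite {t : DyckTree k // t.size = n} :=
  let e := excursionEquivDyckTree k n
  Finite.of_injective (β := Fin (n + 1) → Fin (k + 1))
    (fun t j => ⟨(e.symm t).1 j, Nat.lt_succ_of_le ((e.symm t).2.2.2.1 j)⟩)
    fun _ _ heq =>
      e.symm.injective (Subtype.ext (funext fun j => congrArg Fin.val (congrFun heq j)))

theorem card_size_eq_zero (k : ℕ) : Nat.card {t : DyckTree k // t.size = 0} = 1 := by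
  refine Nat.card_eq_one_iff_exists.2 ⟨⟨leaf, rfl⟩, fun ⟨t, ht⟩ => ?_⟩
  cases t with
  | leaf => rfl
  | node => simp [size] at ht

theorem card_size_eq_one (k : ℕ) : Nat.card {t : DyckTree k // t.size = 1} = 0 := by
  refine @Nat.card_of_isEmpty _ ⟨fun ⟨t, ht⟩ => ?_⟩
  cases t <;> simp [size] at ht

theorem card_zero_size_eq_succ (n : ℕ) : Nat.card {t : DyckTree 0 // t.size = n + 1} = 0 := by
  refine @Nat.card_of_isEmpty _ ⟨fun ⟨t, ht⟩ => ?_⟩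
  cases t
  simp [size] at ht

def sizeAddTwoEquiv (k n : ℕ) :
    {t : DyckTree (k + 1) // t.size = n + 2} ≃
      Σ p : antidiagonal n,
        {a : DyckTree k // a.size = p.1.1} × {b : DyckTree (k + 1) // b.size = p.1.2} where
  toFun
    | ⟨leaf, h⟩ => absurd h (by simp [size])
    | ⟨node a b, h⟩ => ⟨⟨(a.size, b.size), by simp [size] at h; simpa using h⟩, ⟨a, rfl⟩, ⟨b, rfl⟩⟩
  invFun
    | ⟨p, ⟨a, ha⟩, ⟨b, hb⟩⟩ => ⟨node a b, by simp [size, ha, hb, mem_antidiagonal.1 p.2]⟩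
  left_inv
    | ⟨leaf, h⟩ => absurd h (by simp [size])
    | ⟨node _ _, _⟩ => rfl
  right_inv
    | ⟨⟨(_, _), _⟩, ⟨_, ha⟩, ⟨_, hb⟩⟩ => by cases ha; cases hb; rfl

theorem card_size_add_two (k n : ℕ) :
    Nat.card {t : DyckTree (k + 1) // t.size = n + 2} =
      ∑ p ∈ antidiagonal n, Nat.card {a : DyckTree k // a.size = p.1} *
        Nat.card {b : DyckTree (k + 1) // b.size = p.2} := by
  rw [Nat.card_congr (sizeAddTwoEquiv k n), Nat.card_sigma]
  simp only [Nat.card_prod]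
  rw [← Finset.sum_coe_sort (antidiagonal n)]

end DyckTree

theorem coeff_boundedExcursionSeries (k n : ℕ) :
    PowerSeries.coeff n (boundedExcursionSeries k) = Nat.card {t : DyckTree k // t.size = n} := by
  rw [boundedExcursionSeries, PowerSeries.coeff_mk, boundedExcursionCount,
    Nat.card_congr (excursionEquivDyckTree k n)]

theorem boundedExcursionSeries_zero : boundedExcursionSeries 0 = 1 := by
  ext (_ | n)
  · simp [coeff_boundedExcursionSeries, DyckTree.card_size_eq_zero]
  · simp [coeff_boundedExcursionSeries, DyckTree.card_zero_size_eq_succ]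

theorem boundedExcursionSeries_succ (k : ℕ) :
    boundedExcursionSeries (k + 1) =
      1 + PowerSeries.X ^ 2 * (boundedExcursionSeries k * boundedExcursionSeries (k + 1)) := by
  ext (_ | _ | n)
  · simp [coeff_boundedExcursionSeries, DyckTree.card_size_eq_zero]
  · simp [coeff_boundedExcursionSeries, DyckTree.card_size_eq_one, PowerSeries.coeff_X_pow_mul']
  · rw [map_add, PowerSeries.coeff_X_pow_mul', if_pos (by omega), show n + 1 + 1 - 2 = n from rfl,
      PowerSeries.coeff_mul]
    simp [coeff_boundedExcursionSeries, DyckTree.card_size_add_two]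

theorem boundedExcursionSeries_continued_fraction :
    boundedExcursionSeries 0 = 1 ∧
    ∀ k : ℕ, 1 ≤ k →
      boundedExcursionSeries k *
        (1 - PowerSeries.X ^ 2 * boundedExcursionSeries (k - 1)) = 1 := by
  refine ⟨boundedExcursionSeries_zero, fun k hk => ?_⟩
  obtain ⟨k, rfl⟩ := Nat.exists_eq_add_of_le' hk
  rw [Nat.add_sub_cancel]
  linear_combination boundedExcursionSeries_succ k
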